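/- Let f:(0,∞)→ℝ be twice differentiable, strictly convex with f(1)=0, with binary f-divergence g such that g'(t)/t is non-decreasing on (0,1). Let P, Q be probability measures on ℝ with means m_P, m_Q and variances σ_P², σ_Q², and set a = m_P - m_Q and s = |a|/√(2(σ_P² + σ_Q²) + a²). Then (1/2)(D_f(P‖Q) + D_f(Q‖P)) ≥ g(s). -/

import Mathlib

open Real Set MeasureTheory

/-- The binary f-divergence. -/
noncomputable def gbin (f : ℝ → ℝ) (t : ℝ) : ℝ :=
  ((1 - t) / 2) * f ((1 + t) / (1 - t)) + ((1 + t) / 2) * f ((1 - t) / (1 + t))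

lemma gbin_neg (f : ℝ → ℝ) (t : ℝ) : gbin f (-t) = gbin f t := by
  unfold gbin
  have e1 : 1 + -t = 1 - t := by ring
  have e2 : 1 - -t = 1 + t := by ring
  rw [e1, e2]; ring

lemma gbin_abs (f : ℝ → ℝ) (t : ℝ) : gbin f |t| = gbin f t := by
  rcases abs_cases t with ⟨h, _⟩ | ⟨h, _⟩
  · rw [h]
  · rw [h, gbin_neg]

lemma gbin_zero {f : ℝ → ℝ} (hf1 : f 1 = 0) : gbin f 0 = 0 := by
  unfold gbin; norm_num [hf1]

lemma gbin_identity (f : ℝ → ℝ) {p q : ℝ} (hp : 0 < p) (hq : 0 < q) :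
    q * f (p / q) + p * f (q / p) = (p + q) * gbin f ((p - q) / (p + q)) := by
  have hS : (0:ℝ) < p + q := by linarith
  have hS0 : p + q ≠ 0 := ne_of_gt hS
  have e1 : 1 + (p - q) / (p + q) = 2 * p / (p + q) := by field_simp; ring
  have e2 : 1 - (p - q) / (p + q) = 2 * q / (p + q) := by field_simp; ring
  have h1 : (1 + (p - q) / (p + q)) / (1 - (p - q) / (p + q)) = p / q := by
    rw [e1, e2]; field_simp
  have h2 : (1 - (p - q) / (p + q)) / (1 + (p - q) / (p + q)) = q / p := by
    rw [e1, e2]; field_simp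
  unfold gbin
  rw [h1, h2, e1, e2]
  field_simp

lemma gbin_nonneg {f : ℝ → ℝ} (hconv : StrictConvexOn ℝ (Ioi (0:ℝ)) f) (hf1 : f 1 = 0)
    {t : ℝ} (ht : t ∈ Ioo (-1:ℝ) 1) : 0 ≤ gbin f t := by
  have h1 : (0:ℝ) < 1 - t := by linarith [ht.2]
  have h2 : (0:ℝ) < 1 + t := by linarith [ht.1]
  have hx : (1 + t) / (1 - t) ∈ Ioi (0:ℝ) := by
    exact div_pos h2 h1
  have hy : (1 - t) / (1 + t) ∈ Ioi (0:ℝ) := div_pos h1 h2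
  have ha : (0:ℝ) ≤ (1 - t) / 2 := by linarith
  have hb : (0:ℝ) ≤ (1 + t) / 2 := by linarith
  have hab : (1 - t) / 2 + (1 + t) / 2 = 1 := by ring
  have := hconv.convexOn.2 hx hy ha hb hab
  have harg : ((1 - t) / 2) • ((1 + t) / (1 - t)) + ((1 + t) / 2) • ((1 - t) / (1 + t)) = 1 := by
    simp only [smul_eq_mul]
    field_simp
    ring
  rw [harg, hf1] at this
  simpa [gbin, smul_eq_mul] using this

lemma gbin_diff {f : ℝ → ℝ} (hd1 : ∀ x ∈ Ioi (0:ℝ), DifferentiableAt ℝ f x)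
    {t : ℝ} (ht : t ∈ Ioo (-1:ℝ) 1) : DifferentiableAt ℝ (gbin f) t := by
  have h1 : (0:ℝ) < 1 - t := by linarith [ht.2]
  have h2 : (0:ℝ) < 1 + t := by linarith [ht.1]
  have hφ : DifferentiableAt ℝ (fun t : ℝ => (1 + t) / (1 - t)) t := by
    exact DifferentiableAt.div (by fun_prop) (by fun_prop) (ne_of_gt h1)
  have hψ : DifferentiableAt ℝ (fun t : ℝ => (1 - t) / (1 + t)) t := by
    exact DifferentiableAt.div (by fun_prop) (by fun_prop) (ne_of_gt h2)
  have hfφ : DifferentiableAt ℝ (fun t : ℝ => f ((1 + t) / (1 - t))) t :=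
    (hd1 _ (div_pos h2 h1)).comp t hφ
  have hfψ : DifferentiableAt ℝ (fun t : ℝ => f ((1 - t) / (1 + t))) t :=
    (hd1 _ (div_pos h1 h2)).comp t hψ
  exact DifferentiableAt.add (DifferentiableAt.mul (by fun_prop) hfφ)
    (DifferentiableAt.mul (by fun_prop) hfψ)

lemma moment_shift (μ : Measure ℝ) (r : ℝ → ℝ) (m σ2 c₀ : ℝ)
    (hr : Integrable r μ) (hxr : Integrable (fun x => x * r x) μ)
    (hvr : Integrable (fun x => (x - m) ^ 2 * r x) μ)
    (hr1 : ∫ x, r x ∂μ = 1) (hm : ∫ x, x * r x ∂μ = m)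
    (hv : ∫ x, (x - m) ^ 2 * r x ∂μ = σ2) :
    Integrable (fun x => (x - c₀) ^ 2 * r x) μ ∧
      ∫ x, (x - c₀) ^ 2 * r x ∂μ = σ2 + (m - c₀) ^ 2 := by
  have key : (fun x => (x - c₀) ^ 2 * r x)
      = fun x => (x - m) ^ 2 * r x + (2 * (m - c₀)) * (x * r x)
        + (-(m - c₀) * (c₀ + m)) * r x := by
    funext x; ring
  have hi1 : Integrable (fun x => (x - m) ^ 2 * r x + (2 * (m - c₀)) * (x * r x)) μ :=
    hvr.add (hxr.const_mul _)
  have hi : Integrable (fun x => (x - m) ^ 2 * r x + (2 * (m - c₀)) * (x * r x)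
      + (-(m - c₀) * (c₀ + m)) * r x) μ := hi1.add (hr.const_mul _)
  constructor
  · rw [key]; exact hi
  · rw [key, integral_add hi1 (hr.const_mul _), integral_add hvr (hxr.const_mul _),
      integral_const_mul, integral_const_mul, hv, hm, hr1]
    ring

lemma integral_cauchy_schwarz (μ : Measure ℝ) (U V W : ℝ → ℝ)
    (hU : Integrable U μ) (hV : Integrable V μ) (hW : Integrable W μ)
    (hpt : ∀ l : ℝ, ∀ x : ℝ, 0 ≤ U x * (l * l) + (-2 * W x) * l + V x) :
    (∫ x, W x ∂μ) ^ 2 ≤ (∫ x, U x ∂μ) * (∫ x, V x ∂μ) := by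
  have h : ∀ l : ℝ, 0 ≤ (∫ x, U x ∂μ) * (l * l) + (-2 * ∫ x, W x ∂μ) * l + (∫ x, V x ∂μ) := by
    intro l
    have hint : Integrable (fun x => U x * (l * l) + (-2 * W x) * l + V x) μ := by
      exact ((hU.mul_const _).add ((hW.const_mul (-2)).mul_const l)).add hV
    have h0 : 0 ≤ ∫ x, (U x * (l * l) + (-2 * W x) * l + V x) ∂μ :=
      integral_nonneg (fun x => hpt l x)
    have i2 : Integrable (fun x => U x * (l * l)) μ := hU.mul_const (l * l)
    have i3 : Integrable (fun x => (-2 * W x) * l) μ := (hW.const_mul (-2)).mul_const l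
    have i23 : Integrable (fun x => U x * (l * l) + (-2 * W x) * l) μ := i2.add i3
    rw [integral_add i23 hV, integral_add i2 i3,
      integral_mul_const, integral_mul_const, integral_const_mul] at h0
    linarith
  have := discrim_le_zero h
  rw [discrim] at this
  nlinarith [this]

set_option maxHeartbeats 1000000 in
theorem symmetrized_fdiv_ge_gbin_given_means_variances
    (μ : Measure ℝ) (f : ℝ → ℝ)
    (hconv : StrictConvexOn ℝ (Ioi (0:ℝ)) f)
    (hd1 : ∀ x ∈ Ioi (0:ℝ), DifferentiableAt ℝ f x)
    (hd2 : ∀ x ∈ Ioi (0:ℝ), DifferentiableAt ℝ (deriv f) x)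
    (hf1 : f 1 = 0)
    (hmono : MonotoneOn (fun t => deriv (gbin f) t / t) (Ioo (0:ℝ) 1))
    (p q : ℝ → ℝ) (hpm : Measurable p) (hqm : Measurable q)
    (hp : ∀ x, 0 < p x) (hq : ∀ x, 0 < q x)
    (hp1 : ∫ x, p x ∂μ = 1) (hq1 : ∫ x, q x ∂μ = 1)
    (mP mQ σP σQ : ℝ)
    (hmPi : Integrable (fun x => x * p x) μ) (hmQi : Integrable (fun x => x * q x) μ)
    (hvPi : Integrable (fun x => (x - mP) ^ 2 * p x) μ)
    (hvQi : Integrable (fun x => (x - mQ) ^ 2 * q x) μ)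
    (hmP : ∫ x, x * p x ∂μ = mP) (hmQ : ∫ x, x * q x ∂μ = mQ)
    (hvP : ∫ x, (x - mP) ^ 2 * p x ∂μ = σP ^ 2)
    (hvQ : ∫ x, (x - mQ) ^ 2 * q x ∂μ = σQ ^ 2)
    (hIpq : Integrable (fun x => q x * f (p x / q x)) μ)
    (hIqp : Integrable (fun x => p x * f (q x / p x)) μ)
    (hIΔ : Integrable (fun x => (p x - q x) ^ 2 / (p x + q x)) μ) :
    (1 / 2) * ((∫ x, q x * f (p x / q x) ∂μ) + (∫ x, p x * f (q x / p x) ∂μ))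
      ≥ gbin f (|mP - mQ| / Real.sqrt (2 * (σP ^ 2 + σQ ^ 2) + (mP - mQ) ^ 2)) := by
  set a := mP - mQ with ha
  have ip : Integrable p μ := by
    by_contra h; rw [integral_undef h] at hp1; norm_num at hp1
  have iq : Integrable q μ := by
    by_contra h; rw [integral_undef h] at hq1; norm_num at hq1
  have ipq : Integrable (fun x => p x + q x) μ := ip.add iq
  have hσP : 0 ≤ σP ^ 2 := by
    rw [← hvP]; exact integral_nonneg fun x => mul_nonneg (sq_nonneg _) (hp x).le
  have hσQ : 0 ≤ σQ ^ 2 := by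
    rw [← hvQ]; exact integral_nonneg fun x => mul_nonneg (sq_nonneg _) (hq x).le
  have htmem : ∀ x, (p x - q x) / (p x + q x) ∈ Ioo (-1:ℝ) 1 := by
    intro x
    have hS : (0:ℝ) < p x + q x := by linarith [hp x, hq x]
    constructor
    · rw [lt_div_iff₀ hS]; nlinarith [hp x]
    · rw [div_lt_one hS]; linarith [hq x]
  have hptnn : ∀ x, 0 ≤ q x * f (p x / q x) + p x * f (q x / p x) := by
    intro x
    rw [gbin_identity f (hp x) (hq x)]
    exact mul_nonneg (by linarith [hp x, hq x]) (gbin_nonneg hconv hf1 (htmem x))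
  have hsum : ∫ x, (q x * f (p x / q x) + p x * f (q x / p x)) ∂μ
      = (∫ x, q x * f (p x / q x) ∂μ) + (∫ x, p x * f (q x / p x) ∂μ) :=
    integral_add hIpq hIqp
  by_cases ha0 : a = 0
  · have h0 : 0 ≤ ∫ x, (q x * f (p x / q x) + p x * f (q x / p x)) ∂μ :=
      integral_nonneg hptnn
    rw [hsum] at h0
    rw [ha0]
    simp only [abs_zero, zero_div]
    rw [gbin_zero hf1]
    linarith
  -- main case
  have hSigpos : 0 < σP ^ 2 + σQ ^ 2 := by
    by_contra hc
    push_neg at hc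
    have h0 : σP ^ 2 + σQ ^ 2 = 0 := le_antisymm hc (by linarith)
    have hP0 : σP ^ 2 = 0 := by linarith
    have hQ0 : σQ ^ 2 = 0 := by linarith
    have hae1 : (fun x => (x - mP) ^ 2 * p x) =ᵐ[μ] 0 :=
      (integral_eq_zero_iff_of_nonneg
        (fun x => mul_nonneg (sq_nonneg _) (hp x).le) hvPi).1 (by rw [hvP, hP0])
    have hae2 : (fun x => (x - mQ) ^ 2 * q x) =ᵐ[μ] 0 :=
      (integral_eq_zero_iff_of_nonneg
        (fun x => mul_nonneg (sq_nonneg _) (hq x).le) hvQi).1 (by rw [hvQ, hQ0])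
    have hfalse : ∀ᵐ x ∂μ, False := by
      filter_upwards [hae1, hae2] with x h1 h2
      simp only [Pi.zero_apply] at h1 h2
      have e1 : x = mP := by
        rcases mul_eq_zero.1 h1 with h | h
        · have := pow_eq_zero_iff (n := 2) (by norm_num) |>.1 h; linarith
        · exact absurd h (ne_of_gt (hp x))
      have e2 : x = mQ := by
        rcases mul_eq_zero.1 h2 with h | h
        · have := pow_eq_zero_iff (n := 2) (by norm_num) |>.1 h; linarith
        · exact absurd h (ne_of_gt (hq x))
      exact ha0 (by rw [ha, ← e1, ← e2]; ring)
    have hμ : μ = 0 := by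
      rw [ae_iff] at hfalse
      simp only [not_false_iff] at hfalse
      have : μ univ = 0 := by simpa using hfalse
      exact Measure.measure_univ_eq_zero.1 this
    rw [hμ] at hp1
    simp at hp1
  set D := 2 * (σP ^ 2 + σQ ^ 2) + a ^ 2 with hD
  have hDpos : 0 < D := by rw [hD]; nlinarith [sq_nonneg a]
  have hsD : 0 < Real.sqrt D := Real.sqrt_pos.2 hDpos
  set s := |a| / Real.sqrt D with hs
  have hspos : 0 < s := div_pos (abs_pos.2 ha0) hsD
  have hs2 : s ^ 2 = a ^ 2 / D := by
    rw [hs, div_pow, sq_abs, Real.sq_sqrt hDpos.le]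
  have hs2lt : s ^ 2 < 1 := by
    rw [hs2, div_lt_one hDpos, hD]; nlinarith
  have hslt : s < 1 := by nlinarith
  have hs2mem : s ^ 2 ∈ Ioo (0:ℝ) 1 := ⟨by positivity, hs2lt⟩
  set H : ℝ → ℝ := fun u => gbin f (Real.sqrt u) with hHdef
  have hGdiff : ∀ t ∈ Ioo (-1:ℝ) 1, DifferentiableAt ℝ (gbin f) t :=
    fun t ht => gbin_diff hd1 ht
  have hsqrtmem : ∀ u ∈ Ioo (0:ℝ) 1, Real.sqrt u ∈ Ioo (0:ℝ) 1 := by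
    intro u hu
    refine ⟨Real.sqrt_pos.2 hu.1, ?_⟩
    rw [show (1:ℝ) = Real.sqrt 1 by simp]
    exact Real.sqrt_lt_sqrt hu.1.le hu.2
  have hHderiv : ∀ u ∈ Ioo (0:ℝ) 1,
      HasDerivAt H (deriv (gbin f) (Real.sqrt u) * (1 / (2 * Real.sqrt u))) u := by
    intro u hu
    have h1 : HasDerivAt Real.sqrt (1 / (2 * Real.sqrt u)) u :=
      Real.hasDerivAt_sqrt (ne_of_gt hu.1)
    have hm := hsqrtmem u hu
    have h2 : HasDerivAt (gbin f) (deriv (gbin f) (Real.sqrt u)) (Real.sqrt u) :=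
      (hGdiff _ ⟨by linarith [hm.1], hm.2⟩).hasDerivAt
    exact h2.comp u h1
  have hHconv : ConvexOn ℝ (Ico (0:ℝ) 1) H := by
    apply MonotoneOn.convexOn_of_deriv (convex_Ico 0 1)
    · intro u hu
      have hm : Real.sqrt u ∈ Ioo (-1:ℝ) 1 := by
        refine ⟨by linarith [Real.sqrt_nonneg u], ?_⟩
        rw [show (1:ℝ) = Real.sqrt 1 by simp]
        exact Real.sqrt_lt_sqrt hu.1 hu.2
      exact ((hGdiff _ hm).continuousAt.comp
        (Real.continuous_sqrt.continuousAt)).continuousWithinAt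
    · rw [interior_Ico]
      exact fun u hu => ((hHderiv u hu).differentiableAt).differentiableWithinAt
    · rw [interior_Ico]
      intro u₁ h₁ u₂ h₂ h12
      rw [(hHderiv _ h₁).deriv, (hHderiv _ h₂).deriv]
      have m1 := hsqrtmem _ h₁
      have m2 := hsqrtmem _ h₂
      have hmm := hmono m1 m2 (Real.sqrt_le_sqrt h12)
      simp only at hmm
      have e : ∀ y z : ℝ, 0 < z → y * (1 / (2 * z)) = (y / z) / 2 := by
        intro y z hz; field_simp
      rw [e _ _ m1.1, e _ _ m2.1]
      linarith
  have hHsupp : ∀ u ∈ Ico (0:ℝ) 1, ∀ u₀ ∈ Ioo (0:ℝ) 1,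
      H u₀ + deriv H u₀ * (u - u₀) ≤ H u := by
    intro u hu u₀ hu₀
    have hu₀' : u₀ ∈ Ico (0:ℝ) 1 := ⟨hu₀.1.le, hu₀.2⟩
    have hd := hHderiv u₀ hu₀
    rcases lt_trichotomy u u₀ with h | h | h
    · have hsl := hHconv.slope_le_deriv hu hu₀' h hd.differentiableAt
      rw [slope_def_field] at hsl
      have hne : u₀ - u ≠ 0 := sub_ne_zero.2 h.ne'
      have h3 := mul_le_mul_of_nonneg_right hsl (by linarith : (0:ℝ) ≤ u₀ - u)
      rw [div_mul_cancel₀ _ hne] at h3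
      linarith
    · rw [h]; simp
    · have hsl := hHconv.deriv_le_slope hu₀' hu h hd.differentiableAt
      rw [slope_def_field] at hsl
      have hne : u - u₀ ≠ 0 := sub_ne_zero.2 h.ne'
      have h3 := mul_le_mul_of_nonneg_right hsl (by linarith : (0:ℝ) ≤ u - u₀)
      rw [div_mul_cancel₀ _ hne] at h3
      linarith
  set c := deriv H (s ^ 2) with hcdef
  have hHs2 : H (s ^ 2) = gbin f s := by
    rw [hHdef]; simp only; rw [Real.sqrt_sq hspos.le]
  have hH0 : H 0 = 0 := by
    rw [hHdef]; simp only [Real.sqrt_zero]; exact gbin_zero hf1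
  have hgs : 0 ≤ gbin f s := gbin_nonneg hconv hf1 ⟨by linarith, hslt⟩
  have hc0 : 0 ≤ c := by
    have h0 := hHsupp 0 ⟨le_refl 0, one_pos⟩ (s ^ 2) hs2mem
    rw [hH0, hHs2] at h0
    nlinarith [hs2mem.1]
  have key : ∀ x, gbin f s * (p x + q x)
      + c * ((p x - q x) ^ 2 / (p x + q x) - s ^ 2 * (p x + q x))
      ≤ q x * f (p x / q x) + p x * f (q x / p x) := by
    intro x
    rw [gbin_identity f (hp x) (hq x)]
    have hS : (0:ℝ) < p x + q x := by linarith [hp x, hq x]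
    have ht := htmem x
    set t := (p x - q x) / (p x + q x) with htd
    have ht2 : t ^ 2 ∈ Ico (0:ℝ) 1 :=
      ⟨sq_nonneg t, sq_lt_one_iff_abs_lt_one _ |>.2 (abs_lt.2 ⟨ht.1, ht.2⟩)⟩
    have hHt : H (t ^ 2) = gbin f t := by
      rw [hHdef]; simp only; rw [Real.sqrt_sq_eq_abs, gbin_abs]
    have h1 := hHsupp (t ^ 2) ht2 (s ^ 2) hs2mem
    rw [hHt, hHs2, ← hcdef] at h1
    have h2 := mul_le_mul_of_nonneg_left h1 hS.le
    have e1 : (p x - q x) ^ 2 / (p x + q x) = t ^ 2 * (p x + q x) := by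
      rw [htd]; field_simp
    rw [e1]
    have e2 : gbin f s * (p x + q x) + c * (t ^ 2 * (p x + q x) - s ^ 2 * (p x + q x))
        = (p x + q x) * (gbin f s + c * (t ^ 2 - s ^ 2)) := by ring
    rw [e2]
    exact h2
  have irhs1 : Integrable (fun x => gbin f s * (p x + q x)) μ := ipq.const_mul _
  have irhs2 : Integrable
      (fun x => (p x - q x) ^ 2 / (p x + q x) - s ^ 2 * (p x + q x)) μ :=
    hIΔ.sub (ipq.const_mul _)
  have irhs : Integrable (fun x => gbin f s * (p x + q x)
      + c * ((p x - q x) ^ 2 / (p x + q x) - s ^ 2 * (p x + q x))) μ :=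
    irhs1.add (irhs2.const_mul c)
  have ilhs : Integrable (fun x => q x * f (p x / q x) + p x * f (q x / p x)) μ :=
    hIpq.add hIqp
  have hmono_int := integral_mono irhs ilhs key
  set Δ := ∫ x, (p x - q x) ^ 2 / (p x + q x) ∂μ with hΔdef
  have hint_rhs_val : ∫ x, (gbin f s * (p x + q x)
      + c * ((p x - q x) ^ 2 / (p x + q x) - s ^ 2 * (p x + q x))) ∂μ
      = gbin f s * 2 + c * (Δ - s ^ 2 * 2) := by
    rw [integral_add irhs1 (irhs2.const_mul c), integral_const_mul, integral_const_mul,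
      integral_sub hIΔ (ipq.const_mul _), integral_const_mul,
      integral_add ip iq, hp1, hq1, ← hΔdef]
    ring
  rw [hint_rhs_val, hsum] at hmono_int
  -- Cauchy-Schwarz
  set c₀ := (mP + mQ) / 2 with hc₀
  obtain ⟨iU1, vU1⟩ := moment_shift μ p mP (σP ^ 2) c₀ ip hmPi hvPi hp1 hmP hvP
  obtain ⟨iU2, vU2⟩ := moment_shift μ q mQ (σQ ^ 2) c₀ iq hmQi hvQi hq1 hmQ hvQ
  have eU : (fun x => (x - c₀) ^ 2 * (p x + q x))
      = fun x => (x - c₀) ^ 2 * p x + (x - c₀) ^ 2 * q x := by funext x; ring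
  have iU : Integrable (fun x => (x - c₀) ^ 2 * (p x + q x)) μ := by
    rw [eU]; exact iU1.add iU2
  have vU : ∫ x, (x - c₀) ^ 2 * (p x + q x) ∂μ = (σP ^ 2 + σQ ^ 2) + a ^ 2 / 2 := by
    rw [eU, integral_add iU1 iU2, vU1, vU2, hc₀, ha]; ring
  have eW : (fun x => (x - c₀) * (p x - q x))
      = fun x => (x * p x - c₀ * p x) - (x * q x - c₀ * q x) := by funext x; ring
  have iWP : Integrable (fun x => x * p x - c₀ * p x) μ := hmPi.sub (ip.const_mul c₀)
  have iWQ : Integrable (fun x => x * q x - c₀ * q x) μ := hmQi.sub (iq.const_mul c₀)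
  have iW : Integrable (fun x => (x - c₀) * (p x - q x)) μ := by
    rw [eW]; exact iWP.sub iWQ
  have vW : ∫ x, (x - c₀) * (p x - q x) ∂μ = a := by
    rw [eW, integral_sub iWP iWQ, integral_sub hmPi (ip.const_mul c₀),
      integral_sub hmQi (iq.const_mul c₀), integral_const_mul, integral_const_mul,
      hmP, hmQ, hp1, hq1, ha]
    ring
  have hCS := integral_cauchy_schwarz μ
    (fun x => (x - c₀) ^ 2 * (p x + q x))
    (fun x => (p x - q x) ^ 2 / (p x + q x))
    (fun x => (x - c₀) * (p x - q x)) iU hIΔ iW ?_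
  · rw [vW, vU, ← hΔdef] at hCS
    have hΔ2 : 2 * s ^ 2 ≤ Δ := by
      rw [hs2, mul_div_assoc', div_le_iff₀ hDpos, hD]
      have he : 2 * ((σP ^ 2 + σQ ^ 2 + a ^ 2 / 2) * Δ)
          = Δ * (2 * (σP ^ 2 + σQ ^ 2) + a ^ 2) := by ring
      clear_value a Δ
      nlinarith [hCS, he]
    have hcd : 0 ≤ c * (Δ - s ^ 2 * 2) := mul_nonneg hc0 (by linarith)
    linarith
  · intro l x
    have hS : (0:ℝ) < p x + q x := by linarith [hp x, hq x]
    have e : (x - c₀) ^ 2 * (p x + q x) * (l * l) + (-2 * ((x - c₀) * (p x - q x))) * l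
        + (p x - q x) ^ 2 / (p x + q x)
        = (l * (x - c₀) * (p x + q x) - (p x - q x)) ^ 2 / (p x + q x) := by
      field_simp; ring
    rw [e]
    positivity
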